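/- Let l, m be positive integers and Q : Fin l → Fin m → ℤ an integer matrix. Let U = {A : Fin m → ℂ | A i ≠ 0 for all i} and define the monomial map y : U → (Fin l → ℂ) by y(A) a = ∏_{i} (A i)^{Q a i} (integer powers of nonzero complex numbers). Let d : Fin l → ℤ and set ℓ i = Σ_{a} (Q a i)·(d a) for i ∈ Fin m. Let W be an open subset of {y : Fin l → ℂ | y a ≠ 0 for all a} and let Ψ be complex-analytic on W. For i ∈ Fin m, let 𝒟_i be the operator on functions on W sending g to y ↦ Σ_{a} (Q a i)·(y a)·(∂_a g)(y). Suppose Ψ satisfies the equation 𝒫_d Ψ = 0 on W, i.e. for all y ∈ W: (∏_{i : ℓ i > 0} ∏_{k=0}^{ℓ i − 1}(𝒟_i − k))Ψ(y) = (∏_{a} (y a)^{d a}) · (∏_{i : ℓ i < 0} ∏_{k=0}^{−ℓ i − 1}(𝒟_i − k))Ψ(y), where operator products denote compositions in increasing order of i and k. Then Φ = Ψ ∘ y satisfies the GKZ box equation: for every A ∈ U with y(A) ∈ W, (∏_{i : ℓ i > 0} ∂_i^{ℓ i})Φ(A) = (∏_{i : ℓ i < 0} ∂_i^{−ℓ i})Φ(A).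 -/

import Mathlib

/-!
On the torus the monomial map `y` intertwines the Euler operators: `A_i ∂_i (g ∘ y) = (𝒟_i g) ∘ y`,
and more generally `∂_i (A^e · g ∘ y) = A^(e - δ_i) · ((𝒟_i + e_i) g) ∘ y`. Iterating,
`∂_i^n (g ∘ y) = A_i^(-n) · (𝒟_i (𝒟_i - 1) ⋯ (𝒟_i - n + 1) g) ∘ y`, and derivatives in the other
variables only multiply by the corresponding monomials. So both sides of the box equation are
monomials in `A` times the two sides of `𝒫_d Ψ = 0` at `y(A)`, and the monomials match because
`y(A)^d = A^ℓ`.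
-/

/-- Composition of a list of operators, in order: `[T₀, T₁, …] ↦ T₀ ∘ T₁ ∘ ⋯`. -/
def compList {α : Type*} (ops : List (α → α)) : α → α :=
  ops.foldr (· ∘ ·) id

/-- The partial derivative operator in the `i`-th coordinate:
`(pdiff i g)(A) = ∂_i g (A) = (fderiv ℂ g A)(e_i)`. -/
noncomputable def pdiff {m : ℕ} (i : Fin m) (g : (Fin m → ℂ) → ℂ) : (Fin m → ℂ) → ℂ :=
  fun A => fderiv ℂ g A (Pi.single i 1)

/-- The shifted operator `(𝒟_i − k)` in the `y`-variables, where
`𝒟_i(g)(y) = Σ_a (Q a i) · y_a · (∂_a g)(y)`. -/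
noncomputable def eulerOpY {l m : ℕ} (Q : Fin l → Fin m → ℤ) (i : Fin m) (k : ℕ)
    (g : (Fin l → ℂ) → ℂ) : (Fin l → ℂ) → ℂ :=
  fun y => (∑ a, (Q a i : ℂ) * y a * fderiv ℂ g y (Pi.single a 1)) - (k : ℂ) * g y

open Filter Topology

lemma compList_append {α : Type*} (L₁ L₂ : List (α → α)) :
    compList (L₁ ++ L₂) = compList L₁ ∘ compList L₂ := by
  induction L₁ with
  | nil => rfl
  | cons f L ih => simp only [compList, List.foldr_cons, List.foldr_append] at ih ⊢; rw [ih]; rfl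

section

variable {m : ℕ} {i : Fin m} {f₁ f₂ : (Fin m → ℂ) → ℂ} {A : Fin m → ℂ}

lemma Filter.EventuallyEq.pdiff (h : f₁ =ᶠ[𝓝 A] f₂) :
    _root_.pdiff i f₁ =ᶠ[𝓝 A] _root_.pdiff i f₂ := by
  filter_upwards [h.eventuallyEq_nhds] with B hB
  simp only [_root_.pdiff, hB.fderiv_eq]

lemma Filter.EventuallyEq.pdiff_iterate (h : f₁ =ᶠ[𝓝 A] f₂) (n : ℕ) :
    (_root_.pdiff i)^[n] f₁ =ᶠ[𝓝 A] (_root_.pdiff i)^[n] f₂ := by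
  induction n with
  | zero => exact h
  | succ n ih => simpa only [Function.iterate_succ_apply'] using ih.pdiff

end

section Monomial

variable {ι : Type*} [Fintype ι]

noncomputable def zmonomial (e : ι → ℤ) (B : ι → ℂ) : ℂ := ∏ j, B j ^ e j

lemma zmonomial_add {B : ι → ℂ} (hB : ∀ j, B j ≠ 0) (e f : ι → ℤ) :
    zmonomial (e + f) B = zmonomial e B * zmonomial f B := by
  simp only [zmonomial, Pi.add_apply, zpow_add₀ (hB _), Finset.prod_mul_distrib]

lemma zmonomial_single [DecidableEq ι] (B : ι → ℂ) (i : ι) :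
    zmonomial (Pi.single i 1) B = B i := by
  rw [zmonomial, Finset.prod_eq_single i (fun j _ hj => by simp [hj]) (by simp)]
  simp

lemma zmonomial_update_sub_one [DecidableEq ι] {B : ι → ℂ} (hB : ∀ j, B j ≠ 0) (e : ι → ℤ)
    (i : ι) : zmonomial (Function.update e i (e i - 1)) B = zmonomial e B / B i := by
  have h := zmonomial_add hB (Function.update e i (e i - 1)) (Pi.single i 1)
  rw [show Function.update e i (e i - 1) + Pi.single i 1 = e by
    ext j; rcases eq_or_ne j i with rfl | hj <;> simp [*], zmonomial_single] at h
  rw [h, mul_div_cancel_right₀ _ (hB i)]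

lemma hasFDerivAt_zmonomial [DecidableEq ι] (e : ι → ℤ) {A : ι → ℂ} (hA : ∀ j, A j ≠ 0) :
    HasFDerivAt (zmonomial e)
      (∑ j, (e j * zmonomial e A / A j) • (ContinuousLinearMap.proj j : (ι → ℂ) →L[ℂ] ℂ)) A := by
  have hfactor (j : ι) : HasFDerivAt (fun B : ι → ℂ => B j ^ e j)
      ((e j * A j ^ (e j - 1)) • (ContinuousLinearMap.proj j : (ι → ℂ) →L[ℂ] ℂ)) A :=
    (hasDerivAt_zpow (e j) (A j) (.inl (hA j))).comp_hasFDerivAt (h₂ := fun z => z ^ e j) A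
      (ContinuousLinearMap.proj j : (ι → ℂ) →L[ℂ] ℂ).hasFDerivAt
  refine (HasFDerivAt.finsetProd fun j _ => hfactor j).congr_fderiv
    (Finset.sum_congr rfl fun j _ => ?_)
  rw [smul_smul, zmonomial, ← Finset.mul_prod_erase _ _ (Finset.mem_univ j), zpow_sub_one₀ (hA j)]
  congr 1
  field_simp

end Monomial

lemma zpow_sum₀ {G₀ κ : Type*} [CommGroupWithZero G₀] {x : G₀} (hx : x ≠ 0) (s : Finset κ)
    (e : κ → ℤ) : x ^ ∑ a ∈ s, e a = ∏ a ∈ s, x ^ e a := by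
  induction s using Finset.cons_induction with
  | empty => simp
  | cons a s ha ih => rw [Finset.sum_cons, Finset.prod_cons, zpow_add₀ hx, ih]

section MonomialMap

variable {ι κ : Type*} [Fintype ι]

noncomputable def monomialMap (Q : κ → ι → ℤ) (B : ι → ℂ) : κ → ℂ :=
  fun a => zmonomial (Q a) B

lemma hasFDerivAt_monomialMap [DecidableEq ι] (Q : κ → ι → ℤ) {A : ι → ℂ}
    (hA : ∀ j, A j ≠ 0) :
    HasFDerivAt (monomialMap Q) (ContinuousLinearMap.pi fun a =>
      ∑ j, (Q a j * monomialMap Q A a / A j) • (ContinuousLinearMap.proj j : (ι → ℂ) →L[ℂ] ℂ)) A :=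
  hasFDerivAt_pi.2 fun a => hasFDerivAt_zmonomial (Q a) hA

lemma prod_monomialMap_zpow [Fintype κ] (Q : κ → ι → ℤ) {A : ι → ℂ} (hA : ∀ j, A j ≠ 0)
    (d : κ → ℤ) :
    ∏ a, monomialMap Q A a ^ d a = zmonomial (fun j => ∑ a, Q a j * d a) A := by
  simp only [monomialMap, zmonomial, ← Finset.prod_zpow, ← zpow_mul]
  rw [Finset.prod_comm]
  exact Finset.prod_congr rfl fun j _ => (zpow_sum₀ (hA j) _ _).symm

lemma isOpen_torus_inter_preimage_monomialMap (Q : κ → ι → ℤ) {W : Set (κ → ℂ)}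
    (hW : IsOpen W) : IsOpen {B : ι → ℂ | (∀ j, B j ≠ 0) ∧ monomialMap Q B ∈ W} := by
  classical
  have hT : IsOpen {B : ι → ℂ | ∀ j, B j ≠ 0} := by
    simpa [Set.pi] using isOpen_set_pi Set.finite_univ fun j _ => isOpen_ne (x := (0 : ℂ))
  exact ContinuousOn.isOpen_inter_preimage
    (fun A hA => (hasFDerivAt_monomialMap Q hA).continuousAt.continuousWithinAt) hT hW

end MonomialMap

section EulerOperator

variable {l m : ℕ} (Q : Fin l → Fin m → ℤ) {W : Set (Fin l → ℂ)}

/-- The operator `𝒟_i`, so that `eulerOpY Q i k = 𝒟_i - k`. -/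
noncomputable def eulerOp (i : Fin m) (g : (Fin l → ℂ) → ℂ) : (Fin l → ℂ) → ℂ :=
  fun z => ∑ a, (Q a i : ℂ) * z a * fderiv ℂ g z (Pi.single a 1)

lemma eulerOpY_apply (i : Fin m) (k : ℕ) (g : (Fin l → ℂ) → ℂ) (z : Fin l → ℂ) :
    eulerOpY Q i k g z = eulerOp Q i g z - k * g z := rfl

lemma eulerOp_eq_fderiv (i : Fin m) (g : (Fin l → ℂ) → ℂ) (z : Fin l → ℂ) :
    eulerOp Q i g z = fderiv ℂ g z (fun a => Q a i * z a) := by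
  conv_rhs => rw [← Finset.univ_sum_single (fun a => (Q a i : ℂ) * z a)]
  simp only [map_sum, eulerOp]
  refine Finset.sum_congr rfl fun a _ => ?_
  rw [show Pi.single a ((Q a i : ℂ) * z a) = ((Q a i : ℂ) * z a) • Pi.single a (1 : ℂ) by
    simp [← Pi.single_smul'], map_smul, smul_eq_mul]

variable {Q}

lemma AnalyticOnNhd.eulerOp {g : (Fin l → ℂ) → ℂ} (hg : AnalyticOnNhd ℂ g W) (i : Fin m) :
    AnalyticOnNhd ℂ (eulerOp Q i g) W :=
  Finset.analyticOnNhd_fun_sum _ fun a _ =>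
    (analyticOnNhd_const.mul
      ((ContinuousLinearMap.proj a : (Fin l → ℂ) →L[ℂ] ℂ).analyticOnNhd W)).mul
      ((ContinuousLinearMap.apply ℂ ℂ (Pi.single a (1 : ℂ))
        : ((Fin l → ℂ) →L[ℂ] ℂ) →L[ℂ] ℂ).comp_analyticOnNhd hg.fderiv)

lemma AnalyticOnNhd.eulerOpY {g : (Fin l → ℂ) → ℂ} (hg : AnalyticOnNhd ℂ g W) (i : Fin m)
    (k : ℕ) : AnalyticOnNhd ℂ (eulerOpY Q i k g) W :=
  (hg.eulerOp i).sub (analyticOnNhd_const.mul hg)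

lemma eulerOp_eulerOpY {g : (Fin l → ℂ) → ℂ} (hg : AnalyticOnNhd ℂ g W) (i : Fin m) (k : ℕ)
    {z : Fin l → ℂ} (hz : z ∈ W) :
    eulerOp Q i (eulerOpY Q i k g) z = eulerOp Q i (eulerOp Q i g) z - k * eulerOp Q i g z := by
  have hfun : eulerOpY Q i k g = fun z => eulerOp Q i g z - k * g z := rfl
  have hg' := (hg z hz).differentiableAt
  rw [eulerOp_eq_fderiv, eulerOp_eq_fderiv Q i (eulerOp Q i g), eulerOp_eq_fderiv Q i g, hfun,
    fderiv_fun_sub ((hg.eulerOp i z hz).differentiableAt) (hg'.const_mul _),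
    fderiv_const_mul hg']
  rfl

lemma eulerOpY_comm {g : (Fin l → ℂ) → ℂ} (hg : AnalyticOnNhd ℂ g W) (i : Fin m) (j k : ℕ)
    {z : Fin l → ℂ} (hz : z ∈ W) :
    eulerOpY Q i j (eulerOpY Q i k g) z = eulerOpY Q i k (eulerOpY Q i j g) z := by
  simp only [eulerOpY_apply Q i j, eulerOpY_apply Q i k, eulerOp_eulerOpY hg i _ hz]
  ring

lemma Set.EqOn.eulerOpY (hW : IsOpen W) {g₁ g₂ : (Fin l → ℂ) → ℂ} (h : Set.EqOn g₁ g₂ W)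
    (i : Fin m) (k : ℕ) : Set.EqOn (eulerOpY Q i k g₁) (eulerOpY Q i k g₂) W := fun z hz => by
  have hderiv : fderiv ℂ g₁ z = fderiv ℂ g₂ z :=
    (h.eventuallyEq_of_mem (hW.mem_nhds hz)).fderiv_eq
  simp only [_root_.eulerOpY, hderiv, h hz]

variable (Q)

/-- `(𝒟_i - 0) ∘ (𝒟_i - 1) ∘ ⋯ ∘ (𝒟_i - (n - 1))`, the `i`-th factor of `𝒫_d`. -/
noncomputable def fallingEuler (i : Fin m) (n : ℕ) :
    ((Fin l → ℂ) → ℂ) → (Fin l → ℂ) → ℂ :=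
  compList ((List.range n).map (eulerOpY Q i))

lemma fallingEuler_succ (i : Fin m) (n : ℕ) (g : (Fin l → ℂ) → ℂ) :
    fallingEuler Q i (n + 1) g = fallingEuler Q i n (eulerOpY Q i n g) := by
  rw [fallingEuler, List.range_succ, List.map_append, compList_append]
  rfl

variable {Q}

lemma AnalyticOnNhd.fallingEuler (i : Fin m) (n : ℕ) {g : (Fin l → ℂ) → ℂ}
    (hg : AnalyticOnNhd ℂ g W) : AnalyticOnNhd ℂ (fallingEuler Q i n g) W := by
  induction n generalizing g with
  | zero => exact hg
  | succ n ih => rw [fallingEuler_succ]; exact ih (hg.eulerOpY i n)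

lemma AnalyticOnNhd.compList_fallingEuler (nf : Fin m → ℕ) (L : List (Fin m))
    {g : (Fin l → ℂ) → ℂ} (hg : AnalyticOnNhd ℂ g W) :
    AnalyticOnNhd ℂ (compList (L.map fun i => _root_.fallingEuler Q i (nf i)) g) W := by
  induction L with
  | nil => exact hg
  | cons i L ih => exact ih.fallingEuler i (nf i)

lemma Set.EqOn.fallingEuler (hW : IsOpen W) (i : Fin m) (n : ℕ) {g₁ g₂ : (Fin l → ℂ) → ℂ}
    (h : Set.EqOn g₁ g₂ W) : Set.EqOn (fallingEuler Q i n g₁) (fallingEuler Q i n g₂) W := by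
  induction n generalizing g₁ g₂ with
  | zero => exact h
  | succ n ih => rw [fallingEuler_succ, fallingEuler_succ]; exact ih (h.eulerOpY hW i n)

lemma eulerOpY_fallingEuler_comm (hW : IsOpen W) (i : Fin m) (j n : ℕ)
    {g : (Fin l → ℂ) → ℂ} (hg : AnalyticOnNhd ℂ g W) :
    Set.EqOn (eulerOpY Q i j (fallingEuler Q i n g)) (fallingEuler Q i n (eulerOpY Q i j g)) W := by
  induction n generalizing g with
  | zero => exact fun _ _ => rfl
  | succ n ih =>
    intro z hz
    rw [fallingEuler_succ, fallingEuler_succ, ih (hg.eulerOpY i n) hz]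
    exact Set.EqOn.fallingEuler hW i n (fun w hw => eulerOpY_comm hg i j n hw) hz

/-- Differentiating produces the factors `𝒟_i - k` in the order opposite to `fallingEuler`;
they commute on functions analytic on `W`. -/
lemma fallingEuler_succ_eqOn (hW : IsOpen W) (i : Fin m) (n : ℕ) {g : (Fin l → ℂ) → ℂ}
    (hg : AnalyticOnNhd ℂ g W) :
    Set.EqOn (fallingEuler Q i (n + 1) g) (eulerOpY Q i n (fallingEuler Q i n g)) W := by
  intro z hz
  rw [fallingEuler_succ]
  exact (eulerOpY_fallingEuler_comm hW i n n hg hz).symm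

end EulerOperator

section Pullback

variable {l m : ℕ} {Q : Fin l → Fin m → ℤ} {W : Set (Fin l → ℂ)}

lemma pdiff_zmonomial_mul_comp (e : Fin m → ℤ) (i : Fin m) {g : (Fin l → ℂ) → ℂ}
    {A : Fin m → ℂ} (hA : ∀ j, A j ≠ 0) (hg : DifferentiableAt ℂ g (monomialMap Q A)) :
    pdiff i (fun B => zmonomial e B * g (monomialMap Q B)) A
      = zmonomial e A / A i * (eulerOp Q i g (monomialMap Q A) + e i * g (monomialMap Q A)) := by
  have hF : HasFDerivAt (fun B => zmonomial e B * g (monomialMap Q B)) _ A :=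
    (hasFDerivAt_zmonomial e hA).mul (hg.hasFDerivAt.comp A (hasFDerivAt_monomialMap Q hA))
  have hdir : (ContinuousLinearMap.pi fun a => ∑ j, (Q a j * monomialMap Q A a / A j) •
        (ContinuousLinearMap.proj j : (Fin m → ℂ) →L[ℂ] ℂ)) (Pi.single i 1)
      = (A i)⁻¹ • fun a => (Q a i : ℂ) * monomialMap Q A a := by
    ext a; simp [Pi.single_apply]; ring
  simp only [pdiff, hF.fderiv, add_apply, smul_apply, ContinuousLinearMap.comp_apply, hdir,
    map_smul, ← eulerOp_eq_fderiv, sum_apply, ContinuousLinearMap.proj_apply, smul_eq_mul,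
    Pi.single_apply, mul_ite, mul_one, mul_zero, Finset.sum_ite_eq', Finset.mem_univ, if_true]
  ring

lemma pdiff_iterate_zmonomial_mul_comp (hW : IsOpen W) {g : (Fin l → ℂ) → ℂ}
    (hg : AnalyticOnNhd ℂ g W) {e : Fin m → ℤ} {i : Fin m} (he : e i = 0) (n : ℕ)
    {A : Fin m → ℂ} (hA : ∀ j, A j ≠ 0) (hAW : monomialMap Q A ∈ W) :
    (pdiff i)^[n] (fun B => zmonomial e B * g (monomialMap Q B)) A
      = zmonomial (Function.update e i (-n)) A * fallingEuler Q i n g (monomialMap Q A) := by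
  induction n generalizing A with
  | zero =>
    rw [Nat.cast_zero, neg_zero, Function.update_eq_self_iff.mpr he.symm]
    rfl
  | succ n ih =>
    have hev : (pdiff i)^[n] (fun B => zmonomial e B * g (monomialMap Q B))
        =ᶠ[𝓝 A] fun B => zmonomial (Function.update e i (-n)) B *
          fallingEuler Q i n g (monomialMap Q B) :=
      Filter.eventually_of_mem
        ((isOpen_torus_inter_preimage_monomialMap Q hW).mem_nhds ⟨hA, hAW⟩)
        fun B hB => ih hB.1 hB.2
    rw [Function.iterate_succ_apply', hev.pdiff.eq_of_nhds,
      pdiff_zmonomial_mul_comp _ _ hA ((hg.fallingEuler i n) _ hAW).differentiableAt,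
      fallingEuler_succ_eqOn hW i n hg hAW, eulerOpY_apply, ← zmonomial_update_sub_one hA]
    simp only [Function.update_self, Function.update_idem]
    push_cast
    ring_nf

lemma compList_pdiff_iterate_comp (hW : IsOpen W) {g : (Fin l → ℂ) → ℂ}
    (hg : AnalyticOnNhd ℂ g W) (nf : Fin m → ℕ) {L : List (Fin m)} (hL : L.Nodup)
    {A : Fin m → ℂ} (hA : ∀ j, A j ≠ 0) (hAW : monomialMap Q A ∈ W) :
    compList (L.map fun i => (pdiff i)^[nf i]) (g ∘ monomialMap Q) A
      = zmonomial (fun j => if j ∈ L then -(nf j : ℤ) else 0) A *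
          compList (L.map fun i => fallingEuler Q i (nf i)) g (monomialMap Q A) := by
  induction L generalizing A with
  | nil => simp [compList, zmonomial]
  | cons i L ih =>
    obtain ⟨hiL, hL⟩ := List.nodup_cons.mp hL
    have hev : compList (L.map fun i => (pdiff i)^[nf i]) (g ∘ monomialMap Q)
        =ᶠ[𝓝 A] fun B => zmonomial (fun j => if j ∈ L then -(nf j : ℤ) else 0) B *
          compList (L.map fun i => fallingEuler Q i (nf i)) g (monomialMap Q B) :=
      Filter.eventually_of_mem
        ((isOpen_torus_inter_preimage_monomialMap Q hW).mem_nhds ⟨hA, hAW⟩)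
        fun B hB => ih hL hB.1 hB.2
    have hexp : Function.update (fun j => if j ∈ L then -(nf j : ℤ) else 0) i (-(nf i : ℤ))
        = fun j => if j ∈ i :: L then -(nf j : ℤ) else 0 := by
      ext j; by_cases hj : j = i <;> simp [hj, hiL]
    calc compList ((i :: L).map fun i => (pdiff i)^[nf i]) (g ∘ monomialMap Q) A
        = (pdiff i)^[nf i] (compList (L.map fun i => (pdiff i)^[nf i]) (g ∘ monomialMap Q)) A :=
          rfl
      _ = _ := (hev.pdiff_iterate _).eq_of_nhds
      _ = _ := pdiff_iterate_zmonomial_mul_comp hW (hg.compList_fallingEuler nf L)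
          (by simp [hiL]) _ hA hAW
      _ = _ := by rw [hexp]; rfl

end Pullback

lemma zmonomial_posPart_mul {ι : Type*} [Fintype ι] (ℓ : ι → ℤ) {A : ι → ℂ}
    (hA : ∀ j, A j ≠ 0) :
    zmonomial (fun j => if 0 < ℓ j then -((ℓ j).toNat : ℤ) else 0) A * zmonomial ℓ A
      = zmonomial (fun j => if ℓ j < 0 then -((-ℓ j).toNat : ℤ) else 0) A := by
  rw [← zmonomial_add hA]
  congr 1
  ext j
  simp only [Pi.add_apply]
  split_ifs <;> omega

theorem stmt6_general (l m : ℕ) (Q : Fin l → Fin m → ℤ)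
    (y : (Fin m → ℂ) → (Fin l → ℂ))
    (hy : ∀ (A : Fin m → ℂ) (a : Fin l), y A a = ∏ i, (A i) ^ (Q a i))
    (d : Fin l → ℤ) (ℓ : Fin m → ℤ) (hℓ : ∀ i, ℓ i = ∑ a, Q a i * d a)
    (W : Set (Fin l → ℂ))
    (hW : IsOpen W) (Ψ : (Fin l → ℂ) → ℂ) (hΨ : AnalyticOnNhd ℂ Ψ W)
    (hP : ∀ yy ∈ W,
      compList (((List.finRange m).filter (fun i => decide (0 < ℓ i))).map
          (fun i => compList ((List.range (ℓ i).toNat).map (eulerOpY Q i)))) Ψ yy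
        = (∏ a, (yy a) ^ (d a)) *
            compList (((List.finRange m).filter (fun i => decide (ℓ i < 0))).map
                (fun i => compList ((List.range (-ℓ i).toNat).map (eulerOpY Q i)))) Ψ yy)
    (A : Fin m → ℂ) (hA : ∀ i, A i ≠ 0) (hAW : y A ∈ W) :
    compList (((List.finRange m).filter (fun i => decide (0 < ℓ i))).map
        (fun i => (pdiff i)^[(ℓ i).toNat])) (Ψ ∘ y) A
      = compList (((List.finRange m).filter (fun i => decide (ℓ i < 0))).map
          (fun i => (pdiff i)^[(-ℓ i).toNat])) (Ψ ∘ y) A := by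
  obtain rfl : y = monomialMap Q := funext fun B => funext (hy B)
  have hyd : ∏ a, monomialMap Q A a ^ d a = zmonomial ℓ A := by
    rw [prod_monomialMap_zpow Q hA d, funext hℓ]
  have hpos := compList_pdiff_iterate_comp hW hΨ (fun i => (ℓ i).toNat)
    ((List.nodup_finRange m).filter fun i => decide (0 < ℓ i)) hA hAW
  have hneg := compList_pdiff_iterate_comp hW hΨ (fun i => (-ℓ i).toNat)
    ((List.nodup_finRange m).filter fun i => decide (ℓ i < 0)) hA hAW
  simp only [List.mem_filter, List.mem_finRange, true_and, decide_eq_true_eq] at hpos hneg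
  simp only [← fallingEuler.eq_1] at hP
  rw [hpos, hneg, hP _ hAW, hyd, ← mul_assoc, zmonomial_posPart_mul ℓ hA]

/-- If `Ψ`, analytic on an open subset `W` of the torus `{y | ∀ a, y a ≠ 0}`,
satisfies the Givental-type equation `𝒫_d Ψ = 0`, i.e.
`(∏_{i : ℓ i > 0} ∏_{k=0}^{ℓ i − 1}(𝒟_i − k))Ψ = y^d · (∏_{i : ℓ i < 0} ∏_{k=0}^{−ℓ i − 1}(𝒟_i − k))Ψ`
on `W`, where `ℓ i = Σ_a (Q a i)·(d a)`, then `Φ = Ψ ∘ y` with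
`y(A)_a = ∏_i (A i)^{Q a i}` satisfies the GKZ box equation
`(∏_{i : ℓ i > 0} ∂_i^{ℓ i})Φ(A) = (∏_{i : ℓ i < 0} ∂_i^{−ℓ i})Φ(A)` at every point `A`
of the torus with `y(A) ∈ W`. -/
theorem stmt6 (l m : ℕ) (hl : 0 < l) (hm : 0 < m) (Q : Fin l → Fin m → ℤ)
    (y : (Fin m → ℂ) → (Fin l → ℂ))
    (hy : ∀ (A : Fin m → ℂ) (a : Fin l), y A a = ∏ i, (A i) ^ (Q a i))
    (d : Fin l → ℤ) (ℓ : Fin m → ℤ) (hℓ : ∀ i, ℓ i = ∑ a, Q a i * d a)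
    (W : Set (Fin l → ℂ)) (hWsub : W ⊆ {yy : Fin l → ℂ | ∀ a, yy a ≠ 0})
    (hW : IsOpen W) (Ψ : (Fin l → ℂ) → ℂ) (hΨ : AnalyticOnNhd ℂ Ψ W)
    (hP : ∀ yy ∈ W,
      compList (((List.finRange m).filter (fun i => decide (0 < ℓ i))).map
          (fun i => compList ((List.range (ℓ i).toNat).map (eulerOpY Q i)))) Ψ yy
        = (∏ a, (yy a) ^ (d a)) *
            compList (((List.finRange m).filter (fun i => decide (ℓ i < 0))).map
                (fun i => compList ((List.range (-ℓ i).toNat).map (eulerOpY Q i)))) Ψ yy)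
    (A : Fin m → ℂ) (hA : ∀ i, A i ≠ 0) (hAW : y A ∈ W) :
    compList (((List.finRange m).filter (fun i => decide (0 < ℓ i))).map
        (fun i => (pdiff i)^[(ℓ i).toNat])) (Ψ ∘ y) A
      = compList (((List.finRange m).filter (fun i => decide (ℓ i < 0))).map
          (fun i => (pdiff i)^[(-ℓ i).toNat])) (Ψ ∘ y) A :=
  stmt6_general l m Q y hy d ℓ hℓ W hW Ψ hΨ hP A hA hAW
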